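/- Let α ∈ (0,1), t ∈ [0,1] and β = α^t. Then for every Ω ∈ ℝ, |α(β⁻¹−β)·e^{iΩ} + β − α²β⁻¹| ≤ 1 − α². Consequently, with Λ(Ω) = (1/(K_R+1))·(1−α²)/(1−2α·cos Ω + α²) and Λ_dh(Ω) = (1/(K_R+1))·(α(β⁻¹−β)·e^{iΩ} + β − α²β⁻¹)/(1−2α·cos Ω + α²) for K_R ≥ 0, one has |Λ_dh(Ω)| ≤ Λ(Ω) for all Ω. -/

import Mathlib

/-- The power spectrum `Λ(Ω) = (1/(K_R+1))·(1-α²)/(1-2α cos Ω + α²)`. -/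
noncomputable def powSpec (K_R α Ω : ℝ) : ℝ :=
  (1 / (K_R + 1)) * (1 - α ^ 2) / (1 - 2 * α * Real.cos Ω + α ^ 2)

/-- The cross power spectrum
`Λ_dh(Ω) = (1/(K_R+1))·(α(β⁻¹-β)e^{iΩ} + β - α²β⁻¹)/(1-2α cos Ω + α²)` with `β = α^t`. -/
noncomputable def crossPowSpec (K_R α t Ω : ℝ) : ℂ :=
  (((1 / (K_R + 1)) : ℝ) : ℂ) *
    ((((α * ((α ^ t)⁻¹ - α ^ t) : ℝ) : ℂ) * Complex.exp (Complex.I * (Ω : ℂ))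
        + ((α ^ t : ℝ) : ℂ) - ((α ^ 2 * (α ^ t)⁻¹ : ℝ) : ℂ))
      / (((1 - 2 * α * Real.cos Ω + α ^ 2 : ℝ)) : ℂ))

/-!
For `0 < α ≤ β ≤ 1` both coefficients `α(β⁻¹ - β)` and `β - α²β⁻¹` of the numerator of `Λ_dh`
are nonnegative, so by the triangle inequality its modulus is at most their sum, and
`1 - α² - (α(β⁻¹ - β) + β - α²β⁻¹) = (1 - α)(1 - β)(1 - αβ⁻¹) ≥ 0`.
Taking `β = α^t` and dividing by the common positive factor `(K_R+1)(1 - 2α cos Ω + α²)` of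
`Λ` and `Λ_dh` gives `|Λ_dh| ≤ Λ`.
-/

open Complex

lemma norm_ofReal_mul_exp_add_ofReal_le (a b θ : ℝ) :
    ‖(a : ℂ) * exp (I * θ) + b‖ ≤ |a| + |b| := by
  calc ‖(a : ℂ) * exp (I * θ) + b‖ ≤ ‖(a : ℂ) * exp (I * θ)‖ + ‖(b : ℂ)‖ := norm_add_le _ _
    _ = |a| + |b| := by
      rw [norm_mul, mul_comm I, norm_exp_ofReal_mul_I, mul_one, norm_real, norm_real,
        Real.norm_eq_abs, Real.norm_eq_abs]

lemma one_sub_two_mul_cos_add_sq_pos {α : ℝ} (hα : |α| < 1) (Ω : ℝ) :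
    0 < 1 - 2 * α * Real.cos Ω + α ^ 2 := by
  have h : -|α| ≤ α * Real.cos Ω ∧ α * Real.cos Ω ≤ |α| := by
    rw [← abs_le, abs_mul]
    exact mul_le_of_le_one_right (abs_nonneg α) (Real.abs_cos_le_one Ω)
  nlinarith [sq_abs α, abs_nonneg α]

section Coefficients

variable {α β : ℝ}

lemma mul_inv_sub_self_nonneg (hα : 0 < α) (hαβ : α ≤ β) (hβ : β ≤ 1) :
    0 ≤ α * (β⁻¹ - β) := by
  have hβ0 : 0 < β := hα.trans_le hαβ
  have : 1 ≤ β⁻¹ := (one_le_inv₀ hβ0).mpr hβ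
  exact mul_nonneg hα.le (by linarith)

lemma sub_sq_mul_inv_nonneg (hα : 0 < α) (hαβ : α ≤ β) : 0 ≤ β - α ^ 2 * β⁻¹ := by
  have hβ0 : 0 < β := hα.trans_le hαβ
  rw [sub_nonneg, ← div_eq_mul_inv, div_le_iff₀ hβ0]
  nlinarith

lemma mul_inv_sub_self_add_sub_sq_mul_inv_le (hα : 0 < α) (hαβ : α ≤ β) (hβ : β ≤ 1) :
    α * (β⁻¹ - β) + (β - α ^ 2 * β⁻¹) ≤ 1 - α ^ 2 := by
  have hβ0 : 0 < β := hα.trans_le hαβ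
  have hfactored : 1 - α ^ 2 - (α * (β⁻¹ - β) + (β - α ^ 2 * β⁻¹)) =
      (1 - α) * (1 - β) * (1 - α * β⁻¹) := by
    field_simp
    ring
  have : 0 ≤ 1 - α * β⁻¹ := by
    rw [sub_nonneg, ← div_eq_mul_inv, div_le_one hβ0]
    exact hαβ
  linarith [mul_nonneg (mul_nonneg (by linarith : (0 : ℝ) ≤ 1 - α) (sub_nonneg.mpr hβ)) this]

lemma norm_crossNumerator_le (hα : 0 < α) (hαβ : α ≤ β) (hβ : β ≤ 1) (Ω : ℝ) :
    ‖((α * (β⁻¹ - β) : ℝ) : ℂ) * exp (I * Ω) + (β : ℂ) - ((α ^ 2 * β⁻¹ : ℝ) : ℂ)‖ ≤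
      1 - α ^ 2 := by
  have hsplit : ((α * (β⁻¹ - β) : ℝ) : ℂ) * exp (I * Ω) + (β : ℂ) - ((α ^ 2 * β⁻¹ : ℝ) : ℂ) =
      ((α * (β⁻¹ - β) : ℝ) : ℂ) * exp (I * Ω) + ((β - α ^ 2 * β⁻¹ : ℝ) : ℂ) := by
    push_cast
    ring
  rw [hsplit]
  refine (norm_ofReal_mul_exp_add_ofReal_le _ _ Ω).trans ?_
  rw [abs_of_nonneg (mul_inv_sub_self_nonneg hα hαβ hβ),
    abs_of_nonneg (sub_sq_mul_inv_nonneg hα hαβ)]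
  exact mul_inv_sub_self_add_sub_sq_mul_inv_le hα hαβ hβ

end Coefficients

/-- Pointwise bound on the cross power spectrum: for `α ∈ (0,1)`, `t ∈ [0,1]`, `β = α^t`,
the numerator satisfies `|α(β⁻¹-β)e^{iΩ} + β - α²β⁻¹| ≤ 1 - α²` for every `Ω`, and
consequently `|Λ_dh(Ω)| ≤ Λ(Ω)` for every `Ω` (for any Rician factor `K_R ≥ 0`). -/
theorem crossPowSpec_abs_le_powSpec (α t : ℝ) (hα : α ∈ Set.Ioo (0 : ℝ) 1)
    (ht : t ∈ Set.Icc (0 : ℝ) 1) (K_R : ℝ) (hK : 0 ≤ K_R) :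
    (∀ Ω : ℝ,
      ‖((((α * ((α ^ t)⁻¹ - α ^ t) : ℝ) : ℂ) * Complex.exp (Complex.I * (Ω : ℂ))
          + ((α ^ t : ℝ) : ℂ) - ((α ^ 2 * (α ^ t)⁻¹ : ℝ) : ℂ)))‖ ≤ 1 - α ^ 2) ∧
    (∀ Ω : ℝ, ‖crossPowSpec K_R α t Ω‖ ≤ powSpec K_R α Ω) := by
  obtain ⟨hα0, hα1⟩ := hα
  have hle : α ≤ α ^ t := Real.self_le_rpow_of_le_one hα0.le hα1.le ht.2
  have hle1 : α ^ t ≤ 1 := Real.rpow_le_one hα0.le hα1.le ht.1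
  have hnum := norm_crossNumerator_le hα0 hle hle1
  refine ⟨hnum, fun Ω => ?_⟩
  have hD := one_sub_two_mul_cos_add_sq_pos (abs_lt.mpr ⟨by linarith, hα1⟩) Ω
  have hc : 0 ≤ 1 / (K_R + 1) := by positivity
  rw [crossPowSpec, powSpec, norm_mul, norm_div, norm_real, norm_real, Real.norm_of_nonneg hc,
    Real.norm_of_nonneg hD.le, mul_div_assoc]
  gcongr
  exact hnum Ω
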